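/- arXiv:2510.10850 — 5 statements merged into one kernel-verified Lean document; each statement's English description precedes it below -/
import Mathlib

section
/- The evaluation map φ(η) = Σₙ 1/(η₁⋯ηₙ) on the space of Engel sequences is Lipschitz with constant 4 with respect to the product metric d(α,β) = Σₙ 2^{−n} ρ(αₙ,βₙ). -/
open Finset

/-- Reciprocal on `ℕ∞`, with `1/∞ := 0`. -/
noncomputable def einv (x : ℕ∞) : ℝ := ((x.toNat : ℕ) : ℝ)⁻¹

/-- The metric `ρ` on `ℕ ∪ {∞}`. -/
noncomputable def rho (x y : ℕ∞) : ℝ := if x = y then 0 else einv x + einv y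

/-- The evaluation map `φ(η) = Σₙ 1/(η₁⋯ηₙ)`. -/
noncomputable def engelEval (η : ℕ → ℕ∞) : ℝ :=
  ∑' n : ℕ, ∏ k ∈ range (n + 1), einv (η k)

/-! Let `N` be the first index where `η` and `η'` differ; the terms of `φ` of index `< N`
agree. As every `η k ≥ 2`, the term of index `n ≥ N` of `φ η` is at most `einv (η N) * 2⁻ⁿ`, so
the tail of `φ η` from `N` on is at most `2 * 2⁻ᴺ * einv (η N)`. The difference of the two
nonnegative tails is at most their sum, `4 * 2⁻⁽ᴺ⁺¹⁾ * ρ (η N) (η' N)`, one term of the series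
defining `d`. -/

lemma einv_nonneg (x : ℕ∞) : 0 ≤ einv x := inv_nonneg.2 (Nat.cast_nonneg _)

lemma einv_le_inv_two {x : ℕ∞} (hx : 2 ≤ x) : einv x ≤ 2⁻¹ := by
  rcases eq_or_ne x ⊤ with rfl | hx_top
  · simp [einv]
  · lift x to ℕ using hx_top
    simp only [einv, ENat.toNat_natCast]
    exact inv_anti₀ two_pos (by exact_mod_cast hx)

lemma rho_nonneg (x y : ℕ∞) : 0 ≤ rho x y := by
  unfold rho
  split_ifs
  exacts [le_rfl, add_nonneg (einv_nonneg x) (einv_nonneg y)]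

lemma rho_le_one {x y : ℕ∞} (hx : 2 ≤ x) (hy : 2 ≤ y) : rho x y ≤ 1 := by
  unfold rho
  split_ifs
  · exact zero_le_one
  · linarith [einv_le_inv_two hx, einv_le_inv_two hy]

section Sequence

variable {η η' : ℕ → ℕ∞}

lemma prod_einv_le_mul_pow (hη : ∀ n, 2 ≤ η n) {s : Finset ℕ} {m : ℕ} (hm : m ∈ s) :
    ∏ k ∈ s, einv (η k) ≤ einv (η m) * 2⁻¹ ^ (#s - 1) := by
  rw [← mul_prod_erase s _ hm, ← card_erase_of_mem hm, ← prod_const]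
  exact mul_le_mul_of_nonneg_left
    (prod_le_prod (fun _ _ ↦ einv_nonneg _) fun k _ ↦ einv_le_inv_two (hη k)) (einv_nonneg _)

lemma prod_range_einv_le (hη : ∀ n, 2 ≤ η n) {m n : ℕ} (hmn : m ≤ n) :
    ∏ k ∈ range (n + 1), einv (η k) ≤ einv (η m) * 2⁻¹ ^ n := by
  simpa using prod_einv_le_mul_pow hη (mem_range.2 (Nat.lt_succ_of_le hmn))

lemma summable_prod_range_einv (hη : ∀ n, 2 ≤ η n) :
    Summable fun n ↦ ∏ k ∈ range (n + 1), einv (η k) :=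
  (summable_geometric_two.mul_left (einv (η 0))).of_nonneg_of_le
    (fun _ ↦ prod_nonneg fun k _ ↦ einv_nonneg _)
    fun n ↦ by simpa using prod_range_einv_le hη (Nat.zero_le n)

lemma tsum_prod_range_einv_nat_add_le (hη : ∀ n, 2 ≤ η n) (N : ℕ) :
    ∑' i, ∏ k ∈ range (i + N + 1), einv (η k) ≤ 2 * 2⁻¹ ^ N * einv (η N) := by
  have hgeom : Summable fun i : ℕ ↦ einv (η N) * 2⁻¹ ^ N * 2⁻¹ ^ i := by
    simpa using summable_geometric_two.mul_left (einv (η N) * 2⁻¹ ^ N)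
  calc ∑' i, ∏ k ∈ range (i + N + 1), einv (η k)
      ≤ ∑' i : ℕ, einv (η N) * 2⁻¹ ^ N * 2⁻¹ ^ i := by
        refine ((summable_nat_add_iff N).2 (summable_prod_range_einv hη)).tsum_le_tsum
          (fun i ↦ ?_) hgeom
        simpa [pow_add, mul_assoc, mul_comm] using prod_range_einv_le hη (Nat.le_add_left N i)
    _ = 2 * 2⁻¹ ^ N * einv (η N) := by rw [tsum_mul_left, tsum_geometric_inv_two]; ring

lemma engelEval_sub_eq_tsum_sub (hη : ∀ n, 2 ≤ η n) (hη' : ∀ n, 2 ≤ η' n) {N : ℕ}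
    (hagree : ∀ k < N, η k = η' k) :
    engelEval η - engelEval η' =
      ∑' i, ∏ k ∈ range (i + N + 1), einv (η k) -
        ∑' i, ∏ k ∈ range (i + N + 1), einv (η' k) := by
  have hhead : ∑ n ∈ range N, ∏ k ∈ range (n + 1), einv (η k) =
      ∑ n ∈ range N, ∏ k ∈ range (n + 1), einv (η' k) :=
    sum_congr rfl fun n hn ↦ prod_congr rfl fun k hk ↦
      congrArg einv (hagree k (by simp only [mem_range] at hn hk; omega))
  rw [engelEval, engelEval, ← (summable_prod_range_einv hη).sum_add_tsum_nat_add N,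
    ← (summable_prod_range_einv hη').sum_add_tsum_nat_add N, hhead, add_sub_add_left_eq_sub]

lemma abs_engelEval_sub_le (hη : ∀ n, 2 ≤ η n) (hη' : ∀ n, 2 ≤ η' n) {N : ℕ}
    (hagree : ∀ k < N, η k = η' k) :
    |engelEval η - engelEval η'| ≤ 2 * 2⁻¹ ^ N * (einv (η N) + einv (η' N)) := by
  have hbound_nonneg (ξ : ℕ → ℕ∞) : 0 ≤ 2 * 2⁻¹ ^ N * einv (ξ N) :=
    mul_nonneg (by positivity) (einv_nonneg _)
  have htail_nonneg (ξ : ℕ → ℕ∞) : 0 ≤ ∑' i, ∏ k ∈ range (i + N + 1), einv (ξ k) :=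
    tsum_nonneg fun _ ↦ prod_nonneg fun k _ ↦ einv_nonneg _
  rw [engelEval_sub_eq_tsum_sub hη hη' hagree, mul_add]
  exact abs_sub_le_of_nonneg_of_le (htail_nonneg η)
    ((tsum_prod_range_einv_nat_add_le hη N).trans (le_add_of_nonneg_right (hbound_nonneg η')))
    (htail_nonneg η')
    ((tsum_prod_range_einv_nat_add_le hη' N).trans (le_add_of_nonneg_left (hbound_nonneg η)))

end Sequence

/-- The evaluation map is Lipschitz with constant `4` for the product metric
`d(α,β) = Σₙ 2^{−n} ρ(αₙ,βₙ)` (with coordinates indexed from `1`). -/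
theorem engelEval_lipschitz (η η' : ℕ → ℕ∞)
    (h2 : 2 ≤ η 0) (hmono : ∀ n, η n ≤ η (n + 1))
    (h2' : 2 ≤ η' 0) (hmono' : ∀ n, η' n ≤ η' (n + 1)) :
    |engelEval η - engelEval η'| ≤
      4 * ∑' n : ℕ, (2 : ℝ)⁻¹ ^ (n + 1) * rho (η n) (η' n) := by
  have hη : ∀ n, 2 ≤ η n := fun n ↦ h2.trans (monotone_nat_of_le_succ hmono n.zero_le)
  have hη' : ∀ n, 2 ≤ η' n := fun n ↦ h2'.trans (monotone_nat_of_le_succ hmono' n.zero_le)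
  have hterm_nonneg (n : ℕ) : 0 ≤ (2 : ℝ)⁻¹ ^ (n + 1) * rho (η n) (η' n) :=
    mul_nonneg (by positivity) (rho_nonneg _ _)
  by_cases heq : η = η'
  · subst heq
    simpa using tsum_nonneg hterm_nonneg
  obtain ⟨N, hN, hagree⟩ : ∃ N, η N ≠ η' N ∧ ∀ k < N, η k = η' k := by
    have hex : ∃ n, η n ≠ η' n := Function.ne_iff.1 heq
    exact ⟨Nat.find hex, Nat.find_spec hex, fun k hk ↦ not_not.1 (Nat.find_min hex hk)⟩
  have hsummable : Summable fun n ↦ (2 : ℝ)⁻¹ ^ (n + 1) * rho (η n) (η' n) :=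
    (summable_geometric_two.mul_left 2⁻¹).of_nonneg_of_le hterm_nonneg fun n ↦ by
      simpa [pow_succ, mul_comm] using
        mul_le_mul_of_nonneg_left (rho_le_one (hη n) (hη' n)) (pow_nonneg (inv_nonneg.2 zero_le_two) (n + 1))
  calc |engelEval η - engelEval η'|
      ≤ 2 * 2⁻¹ ^ N * (einv (η N) + einv (η' N)) := abs_engelEval_sub_le hη hη' hagree
    _ = 4 * ((2 : ℝ)⁻¹ ^ (N + 1) * rho (η N) (η' N)) := by rw [rho, if_neg hN]; ring
    _ ≤ 4 * ∑' n : ℕ, (2 : ℝ)⁻¹ ^ (n + 1) * rho (η n) (η' n) := by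
      gcongr
      exact hsummable.le_tsum N fun n _ ↦ hterm_nonneg n
end

section
/- If η is an Engel sequence with all digits finite natural numbers and ηₙ → ∞, then φ(η) is irrational. -/
open Finset Filter

/-! If the Engel series equals `p / b`, then its tails `x_N = ∑ₙ 1 / (η_N ⋯ η_{N+n})` satisfy
`x_{N+1} = η_N x_N - 1`, so every `b x_N` is a positive integer and `x_N ≥ 1 / b`. Monotonicity
bounds `x_N` by the geometric series `∑ₙ η_N^{-(n+1)} = 1 / (η_N - 1)`, hence `η_N ≤ b + 1` for
all `N`, contradicting `η_N → ∞`. -/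

noncomputable def engelTerm (a : ℕ → ℕ) (n : ℕ) : ℝ := ∏ k ∈ range (n + 1), (a k : ℝ)⁻¹

noncomputable def engelSeries (a : ℕ → ℕ) : ℝ := ∑' n, engelTerm a n

lemma hasSum_inv_pow_succ {c : ℝ} (hc : 1 < c) :
    HasSum (fun n : ℕ => c⁻¹ ^ (n + 1)) (c - 1)⁻¹ := by
  have hgeom := (hasSum_geometric_of_lt_one (by positivity) (inv_lt_one_of_one_lt₀ hc)).mul_left c⁻¹
  have hsum : c⁻¹ * (1 - c⁻¹)⁻¹ = (c - 1)⁻¹ := by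
    have : c - 1 ≠ 0 := by linarith
    field_simp
  simpa only [← pow_succ', hsum] using hgeom

section

variable {a : ℕ → ℕ}

lemma engelTerm_pos (ha : ∀ k, 0 < a k) (n : ℕ) : 0 < engelTerm a n :=
  prod_pos fun k _ => by simpa using ha k

lemma engelTerm_le_pow {c : ℝ} (hc : 0 < c) (h : ∀ k, c ≤ a k) (n : ℕ) :
    engelTerm a n ≤ c⁻¹ ^ (n + 1) := by
  calc engelTerm a n ≤ ∏ _k ∈ range (n + 1), c⁻¹ :=
        prod_le_prod (fun k _ => by positivity) fun k _ => inv_anti₀ hc (h k)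
    _ = c⁻¹ ^ (n + 1) := by rw [prod_const, card_range]

lemma engelTerm_zero : engelTerm a 0 = (a 0 : ℝ)⁻¹ := by
  simp [engelTerm]

lemma engelTerm_succ (n : ℕ) :
    engelTerm a (n + 1) = (a 0 : ℝ)⁻¹ * engelTerm (fun k => a (k + 1)) n := by
  rw [engelTerm, prod_range_succ', mul_comm]
  rfl

lemma summable_engelTerm {c : ℝ} (hc : 1 < c) (h : ∀ k, c ≤ a k) : Summable (engelTerm a) := by
  have ha : ∀ k, 0 < a k := fun k => by exact_mod_cast (zero_lt_one.trans hc).trans_le (h k)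
  exact (hasSum_inv_pow_succ hc).summable.of_nonneg_of_le (fun n => (engelTerm_pos ha n).le)
    (engelTerm_le_pow (by linarith) h)

lemma engelSeries_le {c : ℝ} (hc : 1 < c) (h : ∀ k, c ≤ a k) : engelSeries a ≤ (c - 1)⁻¹ :=
  hasSum_le (engelTerm_le_pow (by linarith) h) (summable_engelTerm hc h).hasSum
    (hasSum_inv_pow_succ hc)

lemma engelSeries_pos (h : ∀ k, 2 ≤ a k) : 0 < engelSeries a :=
  (summable_engelTerm one_lt_two fun k => by exact_mod_cast h k).tsum_pos
    (fun n => (engelTerm_pos (fun k => by linarith [h k]) n).le) 0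
    (engelTerm_pos (fun k => by linarith [h k]) 0)

lemma engelSeries_succ_shift (h : ∀ k, 2 ≤ a k) :
    engelSeries (fun k => a (k + 1)) = a 0 * engelSeries a - 1 := by
  have ha0 : (a 0 : ℝ) ≠ 0 := by exact_mod_cast (by linarith [h 0] : a 0 ≠ 0)
  have hs : Summable (engelTerm a) := summable_engelTerm one_lt_two fun k => by exact_mod_cast h k
  rw [show engelSeries a = ∑' n, engelTerm a n from rfl, hs.tsum_eq_zero_add]
  simp only [engelTerm_succ, tsum_mul_left, engelTerm_zero, ← engelSeries.eq_1]
  field_simp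
  ring

lemma exists_int_eq_mul_engelSeries_shift (h : ∀ k, 2 ≤ a k) {b : ℕ} {m : ℤ}
    (hm : b * engelSeries a = m) (N : ℕ) : ∃ m' : ℤ, b * engelSeries (fun k => a (k + N)) = m' := by
  induction N with
  | zero => exact ⟨m, hm⟩
  | succ N ih =>
    obtain ⟨m', hm'⟩ := ih
    refine ⟨a N * m' - b, ?_⟩
    have := engelSeries_succ_shift (a := fun k => a (k + N)) (fun k => h _)
    simp only [Nat.add_right_comm _ 1 N, zero_add] at this
    change (b : ℝ) * engelSeries (fun k => a (k + N + 1)) = _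
    rw [this]
    push_cast
    linear_combination (a N : ℝ) * hm'

lemma le_den_add_one_of_engelSeries_eq_rat (h2 : 2 ≤ a 0) (hmono : Monotone a) {q : ℚ}
    (hq : engelSeries a = q) (N : ℕ) : a N ≤ q.den + 1 := by
  have h : ∀ k, 2 ≤ a k := fun k => h2.trans (hmono k.zero_le)
  obtain ⟨m, hm⟩ := exists_int_eq_mul_engelSeries_shift h (b := q.den) (m := q.num)
    (by rw [hq]; exact_mod_cast q.den_mul_eq_num) N
  set x := engelSeries (fun k => a (k + N))
  have hpos : 0 < x := engelSeries_pos fun k => h _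
  have hm1 : (1 : ℝ) ≤ q.den * x := by
    have hm0 : (0 : ℝ) < m := hm ▸ by positivity
    rw [hm]
    exact_mod_cast Int.cast_pos.mp hm0
  have haN : (2 : ℝ) ≤ a N := by exact_mod_cast h N
  have hle : x * (a N - 1) ≤ 1 := by
    have := engelSeries_le (a := fun k => a (k + N)) (c := a N) (by linarith)
      fun k => by exact_mod_cast hmono (by omega : N ≤ k + N)
    rwa [← le_div_iff₀ (by linarith), one_div]
  suffices (a N : ℝ) ≤ q.den + 1 by exact_mod_cast this
  nlinarith [q.den.cast_nonneg (α := ℝ)]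

end

/-- If `η` is a nondecreasing sequence of integers `≥ 2` tending to infinity, then the
value of the Engel series `Σₙ 1/(η₁⋯ηₙ)` is irrational. -/
theorem engelEval_irrational (η : ℕ → ℕ)
    (h2 : 2 ≤ η 0) (hmono : ∀ n, η n ≤ η (n + 1))
    (htop : Tendsto η atTop atTop) :
    Irrational (∑' n : ℕ, ∏ k ∈ range (n + 1), ((η k : ℝ))⁻¹) := by
  rintro ⟨q, hq⟩
  obtain ⟨N, hN⟩ := (htop.eventually_ge_atTop (q.den + 2)).exists
  have := le_den_add_one_of_engelSeries_eq_rat h2 (monotone_nat_of_le_succ hmono) hq.symm N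
  omega
end

section
/- The composition φ ∘ f is the identity on (0,1]: evaluating the nonterminating Engel digit sequence of x recovers x. -/
/-!
Writing `tₙ = Tⁿ(x)` and `dₙ` for the digits, the recursion `tₙ₊₁ = dₙ tₙ - 1` unrolls to
`x = ∑_{n<N} 1/(d₀⋯dₙ) + t_N/(d₀⋯d_{N-1})`. Since `T` maps `(0,1]` into itself, every digit is
at least `2` and every `tₙ` lies in `(0,1]`, so the remainder is at most `2⁻ᴺ`.
-/

open Finset

/-- The first Engel digit `d₁(x) = ⌊1/x⌋ + 1`. -/
noncomputable def engelD1 (x : ℝ) : ℕ := ⌊1 / x⌋₊ + 1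

/-- The Engel map `T(x) = d₁(x)·x − 1`. -/
noncomputable def engelT (x : ℝ) : ℝ := (engelD1 x : ℝ) * x - 1

/-- The `n`-th Engel digit (0-indexed): `dₙ₊₁(x) = d₁(Tⁿ(x))`. -/
noncomputable def engelDigit (x : ℝ) (n : ℕ) : ℕ := engelD1 (engelT^[n] x)

open Filter Topology

section EngelSeries

variable {d t : ℕ → ℝ}

theorem sum_prod_inv_add_prod_inv_mul_eq (hd : ∀ n, d n ≠ 0)
    (ht : ∀ n, t (n + 1) = d n * t n - 1) (N : ℕ) :
    ∑ n ∈ range N, ∏ k ∈ range (n + 1), (d k)⁻¹ + (∏ k ∈ range N, (d k)⁻¹) * t N = t 0 := by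
  induction N with
  | zero => simp
  | succ N ih =>
    rw [← ih, sum_range_succ, prod_range_succ, ht]
    field_simp [hd N]
    ring

theorem prod_inv_mul_le_inv_two_pow (hd : ∀ n, 2 ≤ d n) (ht : ∀ n, t n ∈ Set.Icc 0 1)
    (N : ℕ) : (∏ k ∈ range N, (d k)⁻¹) * t N ≤ 2⁻¹ ^ N := by
  have hinv_nonneg : ∀ k, 0 ≤ (d k)⁻¹ := fun k => inv_nonneg.2 (by linarith [hd k])
  calc (∏ k ∈ range N, (d k)⁻¹) * t N
      ≤ ∏ k ∈ range N, (d k)⁻¹ :=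
        mul_le_of_le_one_right (prod_nonneg fun k _ => hinv_nonneg k) (ht N).2
    _ ≤ ∏ _k ∈ range N, (2 : ℝ)⁻¹ :=
        prod_le_prod (fun k _ => hinv_nonneg k) (fun k _ => inv_anti₀ two_pos (hd k))
    _ = 2⁻¹ ^ N := by simp

theorem hasSum_prod_inv (hd : ∀ n, 2 ≤ d n) (ht01 : ∀ n, t n ∈ Set.Icc 0 1)
    (ht : ∀ n, t (n + 1) = d n * t n - 1) :
    HasSum (fun n => ∏ k ∈ range (n + 1), (d k)⁻¹) (t 0) := by
  have hinv_nonneg : ∀ k, 0 ≤ (d k)⁻¹ := fun k => inv_nonneg.2 (by linarith [hd k])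
  have hrem : Tendsto (fun N => (∏ k ∈ range N, (d k)⁻¹) * t N) atTop (𝓝 0) :=
    squeeze_zero (fun N => mul_nonneg (prod_nonneg fun k _ => hinv_nonneg k) (ht01 N).1)
      (prod_inv_mul_le_inv_two_pow hd ht01)
      (tendsto_pow_atTop_nhds_zero_of_lt_one (by norm_num) (by norm_num))
  refine (hasSum_iff_tendsto_nat_of_nonneg (fun n => prod_nonneg fun k _ => hinv_nonneg k) _).2 ?_
  have hsum := tendsto_const_nhds (x := t 0) |>.sub hrem
  rw [sub_zero] at hsum
  refine hsum.congr fun N => ?_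
  rw [← sum_prod_inv_add_prod_inv_mul_eq (fun n => by linarith [hd n]) ht N, add_sub_cancel_right]

end EngelSeries

theorem two_le_engelD1 {x : ℝ} (hx : x ∈ Set.Ioc 0 1) : 2 ≤ engelD1 x := by
  have h : 1 ≤ ⌊1 / x⌋₊ := Nat.le_floor (by rw [Nat.cast_one, le_div_iff₀ hx.1]; linarith [hx.2])
  unfold engelD1
  omega

theorem engelT_mem_Ioc {x : ℝ} (hx : x ∈ Set.Ioc 0 1) : engelT x ∈ Set.Ioc 0 1 := by
  obtain ⟨hx0, hx1⟩ := hx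
  have hlt : 1 / x < engelD1 x := by
    simpa [engelD1] using Nat.lt_floor_add_one (1 / x)
  have hle : (⌊1 / x⌋₊ : ℝ) ≤ 1 / x := Nat.floor_le (by positivity)
  rw [div_lt_iff₀ hx0] at hlt
  rw [le_div_iff₀ hx0] at hle
  simp only [engelT, engelD1, Nat.cast_add, Nat.cast_one] at hlt ⊢
  constructor <;> nlinarith

theorem engelT_iterate_mem_Ioc {x : ℝ} (hx : x ∈ Set.Ioc 0 1) (n : ℕ) :
    engelT^[n] x ∈ Set.Ioc 0 1 := by
  induction n with
  | zero => exact hx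
  | succ n ih => exact Function.iterate_succ_apply' engelT n x ▸ engelT_mem_Ioc ih

theorem engelT_iterate_succ (x : ℝ) (n : ℕ) :
    engelT^[n + 1] x = engelDigit x n * engelT^[n] x - 1 :=
  Function.iterate_succ_apply' engelT n x

/-- `φ ∘ f = id` on `(0,1]`: evaluating the nonterminating Engel digit sequence of `x`
recovers `x`. -/
theorem engelEval_engelCoding (x : ℝ) (hx : x ∈ Set.Ioc (0 : ℝ) 1) :
    (∑' n : ℕ, ∏ k ∈ range (n + 1), ((engelDigit x k : ℝ))⁻¹) = x := by
  have hd : ∀ n, (2 : ℝ) ≤ engelDigit x n := fun n => by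
    exact_mod_cast two_le_engelD1 (engelT_iterate_mem_Ioc hx n)
  exact (hasSum_prod_inv hd (fun n => Set.Ioc_subset_Icc_self (engelT_iterate_mem_Ioc hx n))
    (engelT_iterate_succ x)).tsum_eq
end

section
/- The Engel digit coding map f : (0,1] → Σ_E is continuous at every irrational point of (0,1]. -/
/-- The Engel digit coding map `f`, valued in `(ℕ∞)^ℕ` with the product topology. -/
noncomputable def engelCoding (x : ℝ) : ℕ → ℕ∞ := fun n => (engelDigit x n : ℕ∞)

open Filter Topology

theorem Nat.eventually_floor_eq {α : Type*} [Semiring α] [LinearOrder α] [IsStrictOrderedRing α]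
    [FloorSemiring α] [TopologicalSpace α] [OrderTopology α] {w : α}
    (hw : ∀ n : ℕ, w ≠ n) : ∀ᶠ z in 𝓝 w, ⌊z⌋₊ = ⌊w⌋₊ := by
  rcases lt_or_ge w 0 with hneg | hnonneg
  · filter_upwards [Iio_mem_nhds hneg] with z hz
    rw [Nat.floor_of_nonpos hz.le, Nat.floor_of_nonpos hneg.le]
  · have hlt : (⌊w⌋₊ : α) < w := (Nat.floor_le hnonneg).lt_of_ne (hw _).symm
    filter_upwards [Ioo_mem_nhds hlt (Nat.lt_floor_add_one w)] with z hz
    exact Nat.floor_eq_on_Ico _ _ ⟨hz.1.le, hz.2⟩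

namespace Irrational

variable {y : ℝ}

theorem eventually_engelD1_eq (hy : Irrational y) : ∀ᶠ z in 𝓝 y, engelD1 z = engelD1 y := by
  have hinv : Tendsto (fun z : ℝ => 1 / z) (𝓝 y) (𝓝 (1 / y)) := by
    simpa only [one_div] using tendsto_inv₀ hy.ne_zero
  filter_upwards [hinv.eventually (Nat.eventually_floor_eq (one_div y ▸ hy.inv).ne_nat)]
    with z hz
  rw [engelD1, engelD1, hz]

theorem engelT_apply (hy : Irrational y) : Irrational (engelT y) := by
  simpa only [engelT, Nat.cast_one] using
    (hy.natCast_mul (m := engelD1 y) (Nat.succ_ne_zero _)).sub_natCast 1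

theorem engelT_iterate_apply (hy : Irrational y) (n : ℕ) : Irrational (engelT^[n] y) := by
  induction n with
  | zero => exact hy
  | succ n ih => simpa only [Function.iterate_succ_apply'] using ih.engelT_apply

theorem continuousAt_engelT (hy : Irrational y) : ContinuousAt engelT y := by
  have haffine : ContinuousAt (fun z : ℝ => (engelD1 y : ℝ) * z - 1) y := by fun_prop
  refine haffine.congr ?_
  filter_upwards [hy.eventually_engelD1_eq] with z hz
  rw [engelT, hz]

theorem continuousAt_engelT_iterate (hy : Irrational y) (n : ℕ) :
    ContinuousAt engelT^[n] y := by
  induction n with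
  | zero => exact continuousAt_id
  | succ n ih =>
    rw [Function.iterate_succ']
    exact (hy.engelT_iterate_apply n).continuousAt_engelT.comp ih

theorem eventually_engelDigit_eq (hy : Irrational y) (n : ℕ) :
    ∀ᶠ z in 𝓝 y, engelDigit z n = engelDigit y n :=
  (hy.continuousAt_engelT_iterate n).eventually (hy.engelT_iterate_apply n).eventually_engelD1_eq

end Irrational

theorem engelCoding_continuousAt_irrational_general (x : ℝ)
    (hirr : Irrational x) :
    ContinuousWithinAt engelCoding (Set.Ioc (0 : ℝ) 1) x := by
  refine (continuousAt_pi.2 fun n => ?_).continuousWithinAt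
  refine tendsto_const_nhds.congr' ?_
  filter_upwards [hirr.eventually_engelDigit_eq n] with z hz
  simp only [engelCoding, hz]

/-- The Engel digit coding map `f : (0,1] → Σ_E` is continuous at every irrational
point of `(0,1]`. -/
theorem engelCoding_continuousAt_irrational (x : ℝ) (hx : x ∈ Set.Ioc (0 : ℝ) 1)
    (hirr : Irrational x) :
    ContinuousWithinAt engelCoding (Set.Ioc (0 : ℝ) 1) x :=
  engelCoding_continuousAt_irrational_general x hirr
end

section
/- At every rational x ∈ (0,1], the Engel digit coding map f is left-continuous but not right-continuous. -/
open Filter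

/-!
On each fundamental interval `(1/(m+1), 1/m]` the first digit is `m+1` and `T` is the increasing
affine map `y ↦ (m+1)y - 1`. Hence all digits are locally constant from the left at every `x > 0`,
and from the right as long as the orbit avoids the right endpoints `1/(k+1)`. The orbit of a
rational does reach such an endpoint: writing `Tⁿ x = a/b` with `b` fixed, the numerator drops
from `a` to `a - b % a` until `a ∣ b`. Just to the right of `1/(k+1)` the digit is `k+1` rather
than `k+2`, and `T` sends the point to `0⁺`, where every later digit tends to `∞`.
-/

open Set Topology

section Basic

variable {x y w : ℝ}

lemma one_div_lt_engelD1 (x : ℝ) : 1 / x < engelD1 x := by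
  simpa [engelD1] using Nat.lt_floor_add_one (1 / x)

lemma engelT_pos (hx : 0 < x) : 0 < engelT x := by
  have h := (div_lt_iff₀ hx).1 (one_div_lt_engelD1 x)
  rw [engelT]
  linarith

lemma engelT_le_self (hx : 0 < x) : engelT x ≤ x := by
  have h := (le_div_iff₀ hx).1 (Nat.floor_le (one_div_nonneg.2 hx.le))
  simp only [engelT, engelD1, Nat.cast_add, Nat.cast_one]
  linarith

lemma iterate_engelT_pos (hx : 0 < x) (n : ℕ) : 0 < engelT^[n] x := by
  induction n with
  | zero => exact hx
  | succ n ih => rw [Function.iterate_succ_apply']; exact engelT_pos ih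

lemma engelD1_eq_of_one_div_mem_Ico {m : ℕ} (h : 1 / x ∈ Ico (m : ℝ) (m + 1)) :
    engelD1 x = m + 1 := by
  rw [engelD1, Nat.floor_eq_on_Ico m _ h]

lemma engelT_le_engelT_of_engelD1_eq (h : engelD1 y = engelD1 w) (hyw : y ≤ w) :
    engelT y ≤ engelT w := by
  rw [engelT, engelT, h]
  gcongr

lemma engelT_lt_engelT_of_engelD1_eq (h : engelD1 y = engelD1 w) (hyw : y < w) :
    engelT y < engelT w := by
  rw [engelT, engelT, h, engelD1]
  push_cast
  gcongr

lemma tendsto_engelT_of_eventually_engelD1_eq {l : Filter ℝ} {d : ℕ} (hl : l ≤ 𝓝 w)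
    (h : ∀ᶠ y in l, engelD1 y = d) : Tendsto engelT l (𝓝 (d * w - 1)) := by
  refine (((continuous_const_mul (d : ℝ)).sub continuous_const).tendsto w |>.mono_left hl).congr'
    ?_
  filter_upwards [h] with y hy
  simp [engelT, hy]

end Basic

section LeftContinuity

variable {x w : ℝ}

lemma eventually_engelD1_eq_nhdsLE (hw : 0 < w) :
    ∀ᶠ y in 𝓝[≤] w, engelD1 y = engelD1 w := by
  set m := ⌊1 / w⌋₊
  have hcont : ContinuousAt (fun y : ℝ => 1 / y) w :=
    continuousAt_const.div continuousAt_id hw.ne'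
  filter_upwards [self_mem_nhdsWithin, nhdsWithin_le_nhds (Ioi_mem_nhds hw),
    nhdsWithin_le_nhds (hcont.eventually_mem (Iio_mem_nhds (Nat.lt_floor_add_one (1 / w))))]
    with y (hyw : y ≤ w) (hy : 0 < y) (hlt : 1 / y < m + 1)
  exact engelD1_eq_of_one_div_mem_Ico
    ⟨(Nat.floor_le (by positivity)).trans (one_div_le_one_div_of_le hy hyw), hlt⟩

lemma tendsto_engelT_nhdsLE (hw : 0 < w) : Tendsto engelT (𝓝[≤] w) (𝓝[≤] (engelT w)) := by
  have hd := eventually_engelD1_eq_nhdsLE hw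
  refine tendsto_nhdsWithin_iff.2
    ⟨tendsto_engelT_of_eventually_engelD1_eq nhdsWithin_le_nhds hd, ?_⟩
  filter_upwards [hd, self_mem_nhdsWithin] with y hy hyw
  exact engelT_le_engelT_of_engelD1_eq hy hyw

lemma tendsto_iterate_engelT_nhdsLE (hx : 0 < x) (n : ℕ) :
    Tendsto engelT^[n] (𝓝[≤] x) (𝓝[≤] (engelT^[n] x)) := by
  induction n with
  | zero => exact tendsto_id
  | succ n ih =>
    rw [Function.iterate_succ']
    exact (tendsto_engelT_nhdsLE (iterate_engelT_pos hx n)).comp ih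

theorem continuousWithinAt_engelCoding_Iic (hx : 0 < x) :
    ContinuousWithinAt engelCoding (Iic x) x := by
  refine tendsto_pi_nhds.2 fun n => tendsto_const_nhds.congr' ?_
  filter_upwards [tendsto_iterate_engelT_nhdsLE hx n
    |>.eventually (eventually_engelD1_eq_nhdsLE (iterate_engelT_pos hx n))] with y hy
  simp [engelCoding, engelDigit, hy]

end LeftContinuity

section RightLimit

variable {x w : ℝ}

lemma eventually_engelD1_eq_nhds (hw : 0 < w) (hend : ∀ k : ℕ, w ≠ 1 / (k + 1)) :
    ∀ᶠ y in 𝓝 w, engelD1 y = engelD1 w := by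
  have hlt : (⌊1 / w⌋₊ : ℝ) < 1 / w := by
    refine (Nat.floor_le (by positivity)).lt_of_ne fun hm => ?_
    obtain ⟨k, hk⟩ := Nat.exists_eq_add_one.2 (Nat.cast_pos.1 (hm ▸ one_div_pos.2 hw))
    exact hend k (by rw [← one_div_one_div w, ← hm, hk, Nat.cast_succ])
  have hcont : ContinuousAt (fun y : ℝ => 1 / y) w :=
    continuousAt_const.div continuousAt_id hw.ne'
  filter_upwards [hcont.eventually_mem (Ioo_mem_nhds hlt (Nat.lt_floor_add_one (1 / w)))] with y hy
  exact engelD1_eq_of_one_div_mem_Ico (Ioo_subset_Ico_self hy)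

lemma tendsto_engelT_nhdsGT (hw : 0 < w) (hend : ∀ k : ℕ, w ≠ 1 / (k + 1)) :
    Tendsto engelT (𝓝[>] w) (𝓝[>] (engelT w)) := by
  have hd : ∀ᶠ y in 𝓝[>] w, engelD1 y = engelD1 w :=
    nhdsWithin_le_nhds (eventually_engelD1_eq_nhds hw hend)
  refine tendsto_nhdsWithin_iff.2
    ⟨tendsto_engelT_of_eventually_engelD1_eq nhdsWithin_le_nhds hd, ?_⟩
  filter_upwards [hd, self_mem_nhdsWithin] with y hy hwy
  exact engelT_lt_engelT_of_engelD1_eq hy.symm hwy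

lemma eventually_engelD1_eq_nhdsGT_one_div (m : ℕ) :
    ∀ᶠ y in 𝓝[>] (1 / (m + 1 : ℝ)), engelD1 y = m + 1 := by
  have hw : (0 : ℝ) < 1 / (m + 1) := by positivity
  have hcont : ContinuousAt (fun y : ℝ => 1 / y) (1 / (m + 1)) :=
    continuousAt_const.div continuousAt_id hw.ne'
  have hm : (m : ℝ) < 1 / (1 / (m + 1)) := by rw [one_div_one_div]; linarith
  filter_upwards [self_mem_nhdsWithin, nhdsWithin_le_nhds (hcont.eventually_mem (Ioi_mem_nhds hm))]
    with y (hwy : 1 / (m + 1) < y) (hy : (m : ℝ) < 1 / y)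
  refine engelD1_eq_of_one_div_mem_Ico ⟨hy.le, ?_⟩
  simpa using one_div_lt_one_div_of_lt hw hwy

lemma tendsto_engelT_nhdsGT_one_div (m : ℕ) :
    Tendsto engelT (𝓝[>] (1 / (m + 1 : ℝ))) (𝓝[>] 0) := by
  refine tendsto_nhdsWithin_iff.2 ⟨?_, ?_⟩
  · have h := tendsto_engelT_of_eventually_engelD1_eq nhdsWithin_le_nhds
      (eventually_engelD1_eq_nhdsGT_one_div m)
    rwa [Nat.cast_succ, mul_one_div_cancel (by positivity), sub_self] at h
  · filter_upwards [self_mem_nhdsWithin] with y (hy : 1 / (m + 1 : ℝ) < y)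
    exact engelT_pos ((by positivity : (0 : ℝ) < 1 / (m + 1)).trans hy)

lemma tendsto_engelT_nhdsGT_zero : Tendsto engelT (𝓝[>] 0) (𝓝[>] 0) := by
  refine tendsto_nhdsWithin_iff.2 ⟨?_, ?_⟩
  · refine tendsto_of_tendsto_of_tendsto_of_le_of_le' tendsto_const_nhds
      (tendsto_id.mono_left nhdsWithin_le_nhds) ?_ ?_ <;>
    filter_upwards [self_mem_nhdsWithin] with y (hy : 0 < y)
    exacts [(engelT_pos hy).le, engelT_le_self hy]
  · filter_upwards [self_mem_nhdsWithin] with y hy using engelT_pos hy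

lemma tendsto_engelD1_nhdsGT_zero : Tendsto engelD1 (𝓝[>] 0) atTop :=
  (tendsto_add_atTop_nat 1).comp <|
    tendsto_nat_floor_atTop.comp (tendsto_inv_nhdsGT_zero.congr fun y => (one_div y).symm)

lemma tendsto_iterate_engelT_nhdsGT (hx : 0 < x) {n : ℕ}
    (hend : ∀ j < n, ∀ k : ℕ, engelT^[j] x ≠ 1 / (k + 1)) :
    Tendsto engelT^[n] (𝓝[>] x) (𝓝[>] (engelT^[n] x)) := by
  induction n with
  | zero => exact tendsto_id
  | succ n ih =>
    rw [Function.iterate_succ']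
    exact (tendsto_engelT_nhdsGT (iterate_engelT_pos hx n) (hend n n.lt_succ_self)).comp
      (ih fun j hj => hend j (hj.trans n.lt_succ_self))

end RightLimit

lemma engelT_natCast_div {a b : ℕ} (ha : 0 < a) (hb : 0 < b) :
    engelT (a / b) = ((a - b % a : ℕ) : ℝ) / b := by
  have hdiv : ((b / a : ℕ) : ℝ) * a + (b % a : ℕ) = b := by
    exact_mod_cast (Nat.div_add_mod' b a)
  rw [engelT, engelD1, one_div_div, Nat.floor_div_eq_div,
    Nat.cast_sub (Nat.mod_lt b ha).le]
  field_simp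
  push_cast
  linarith

lemma exists_iterate_engelT_natCast_div_eq_one_div {b : ℕ} (hb : 0 < b) (a : ℕ) (ha : 0 < a) :
    ∃ N k : ℕ, engelT^[N] (a / b : ℝ) = 1 / (k + 1) := by
  induction a using Nat.strong_induction_on with
  | _ a ih =>
  by_cases hdvd : a ∣ b
  · obtain ⟨c, rfl⟩ := hdvd
    obtain ⟨k, rfl⟩ := Nat.exists_eq_add_one.2 (Nat.pos_of_mul_pos_left hb)
    refine ⟨0, k, ?_⟩
    rw [Function.iterate_zero_apply, Nat.cast_mul, div_mul_cancel_left₀ (by positivity),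
      Nat.cast_succ, one_div]
  · have hmod : 0 < b % a := Nat.pos_of_ne_zero fun h => hdvd (Nat.dvd_of_mod_eq_zero h)
    obtain ⟨N, k, hN⟩ := ih (a - b % a) (by omega) (by have := Nat.mod_lt b ha; omega)
    exact ⟨N + 1, k, by rw [Function.iterate_succ_apply, engelT_natCast_div ha hb, hN]⟩

lemma exists_iterate_engelT_ratCast_eq_one_div {q : ℚ} (hq : 0 < q) :
    ∃ N k : ℕ, engelT^[N] (q : ℝ) = 1 / (k + 1) := by
  have hnum : ((q.num.toNat : ℕ) : ℝ) = q.num := by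
    exact_mod_cast Int.toNat_of_nonneg (Rat.num_nonneg.2 hq.le)
  rw [Rat.cast_def, ← hnum]
  exact exists_iterate_engelT_natCast_div_eq_one_div q.pos _ (by simpa using Rat.num_pos.2 hq)

/-- When `Tᴺ x = 1/(k+1)` is the first unit fraction in the orbit of `x`, this is the
terminating Engel code `α'` of `x`. -/
noncomputable def engelTerminatingCode (x : ℝ) (N : ℕ) : ℕ → ℕ∞ := fun j =>
  if j < N then engelCoding x j else if j = N then ((engelDigit x N - 1 : ℕ) : ℕ∞) else ⊤

lemma engelTerminatingCode_ne_engelCoding (x : ℝ) (N : ℕ) :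
    engelTerminatingCode x N ≠ engelCoding x := fun h => by
  simpa [engelTerminatingCode, engelCoding] using congrFun h (N + 1)

theorem tendsto_engelCoding_nhdsGT {x : ℝ} (hx : 0 < x) {N k : ℕ}
    (hend : ∀ j < N, ∀ k : ℕ, engelT^[j] x ≠ 1 / (k + 1))
    (hN : engelT^[N] x = 1 / (k + 1)) :
    Tendsto engelCoding (𝓝[>] x) (𝓝 (engelTerminatingCode x N)) := by
  have hT (n : ℕ) (hn : n ≤ N) : Tendsto engelT^[n] (𝓝[>] x) (𝓝[>] (engelT^[n] x)) :=
    tendsto_iterate_engelT_nhdsGT hx fun j hj => hend j (hj.trans_le hn)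
  refine tendsto_pi_nhds.2 fun j => ?_
  rcases lt_trichotomy j N with hj | rfl | hj
  · rw [engelTerminatingCode, if_pos hj]
    refine tendsto_const_nhds.congr' ?_
    filter_upwards [hT j hj.le |>.eventually
      (nhdsWithin_le_nhds (eventually_engelD1_eq_nhds (iterate_engelT_pos hx j) (hend j hj)))]
      with z hz
    simp [engelCoding, engelDigit, hz]
  · have hdigit : engelDigit x j - 1 = k + 1 := by
      rw [engelDigit, engelD1, hN, one_div_one_div, ← Nat.cast_succ, Nat.floor_natCast,
        Nat.add_sub_cancel]
    rw [engelTerminatingCode, if_neg (lt_irrefl j), if_pos rfl, hdigit]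
    refine tendsto_const_nhds.congr' ?_
    filter_upwards [hN ▸ hT j le_rfl |>.eventually (eventually_engelD1_eq_nhdsGT_one_div k)]
      with z hz
    simp [engelCoding, engelDigit, hz]
  · obtain ⟨i, rfl⟩ := Nat.exists_eq_add_of_lt hj
    rw [engelTerminatingCode, if_neg (by omega), if_neg (by omega)]
    have hT0 : Tendsto engelT^[N + 1] (𝓝[>] x) (𝓝[>] 0) := by
      rw [Function.iterate_succ']
      exact (tendsto_engelT_nhdsGT_one_div k).comp (hN ▸ hT N le_rfl)
    have hdigits : Tendsto (fun z => engelDigit z (N + i + 1)) (𝓝[>] x) atTop := by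
      rw [show N + i + 1 = i + (N + 1) by omega]
      simp only [engelDigit, Function.iterate_add_apply]
      exact tendsto_engelD1_nhdsGT_zero.comp ((tendsto_engelT_nhdsGT_zero.iterate i).comp hT0)
    exact ENat.tendsto_natCast_nhds_top.comp hdigits

/-- At every rational `x ∈ (0,1]`, the Engel digit coding map is left-continuous
(`lim_{y↑x} f(y) = f(x)`), while as `z ↓ x` within the domain `(0,1]` the coding
converges to the terminating code `α' ≠ f(x)`. -/
theorem engelCoding_left_cont_not_right_cont (x : ℝ) (hx : x ∈ Set.Ioc (0 : ℝ) 1)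
    (hrat : ∃ q : ℚ, (q : ℝ) = x) :
    Tendsto engelCoding (nhdsWithin x (Set.Ioo (0 : ℝ) x)) (nhds (engelCoding x)) ∧
    ∃ α' : ℕ → ℕ∞, α' ≠ engelCoding x ∧
      Tendsto engelCoding (nhdsWithin x (Set.Ioc (0 : ℝ) 1 ∩ Set.Ioi x)) (nhds α') := by
  obtain ⟨q, rfl⟩ := hrat
  have hx0 : 0 < (q : ℝ) := hx.1
  refine ⟨(continuousWithinAt_engelCoding_Iic hx0).tendsto.mono_left
    (nhdsWithin_mono _ (Ioo_subset_Ioc_self.trans Ioc_subset_Iic_self)), ?_⟩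
  classical
  have hterm := exists_iterate_engelT_ratCast_eq_one_div (Rat.cast_pos.1 hx0)
  obtain ⟨k, hk⟩ := Nat.find_spec hterm
  have hend : ∀ j < Nat.find hterm, ∀ k : ℕ, engelT^[j] (q : ℝ) ≠ 1 / (k + 1) :=
    fun j hj k h => Nat.find_min hterm hj ⟨k, h⟩
  exact ⟨_, engelTerminatingCode_ne_engelCoding _ _,
    (tendsto_engelCoding_nhdsGT hx0 hend hk).mono_left (nhdsWithin_mono _ inter_subset_right)⟩
end
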